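/- Let n ≥ 1, p > 0, and let K : (0,∞) → (0,∞) be continuous such that there exists R₀ > 1 with inf_{r∈(0,R)} K(r) = K(R) for all R > R₀. Let T > 1 satisfy 12 T^{1/2} > R₀, and set B_T = {(x,y,τ) ∈ ℝⁿ×ℝⁿ×ℝ : |x|² ≤ T, |y|² ≤ T, |τ| ≤ T}. Then for every measurable u : ℍⁿ → ℝ and every η ∈ B_T, (K ∗_ℍ |u|^p)(η) ≥ K(12 T^{1/2}) ∫_{B_T} |u(ξ)|^p dξ, where both sides are interpreted in [0,∞]. -/

import Mathlib

open MeasureTheory Filter Real Set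
open scoped ENNReal

noncomputable section

/-- The Heisenberg group `ℍⁿ`, modelled as `ℝⁿ × ℝⁿ × ℝ` with Lebesgue measure. -/
abbrev Heis (n : ℕ) : Type := EuclideanSpace ℝ (Fin n) × EuclideanSpace ℝ (Fin n) × ℝ

/-- The Heisenberg group law `(x,y,τ)∘(x',y',τ') = (x+x', y+y', τ+τ'+2(x·y'−x'·y))`. -/
def hMul {n : ℕ} (η ξ : Heis n) : Heis n :=
  (η.1 + ξ.1, η.2.1 + ξ.2.1,
    η.2.2 + ξ.2.2 + 2 * ∑ i, (η.1 i * ξ.2.1 i - ξ.1 i * η.2.1 i))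

/-- The Heisenberg group inverse `η⁻¹ = −η`. -/
def hInv {n : ℕ} (η : Heis n) : Heis n := (-η.1, -η.2.1, -η.2.2)

/-- The Korányi norm `|(x,y,τ)|_ℍ = ((|x|²+|y|²)² + τ²)^(1/4)`. -/
def kNorm {n : ℕ} (η : Heis n) : ℝ :=
  ((‖η.1‖ ^ 2 + ‖η.2.1‖ ^ 2) ^ 2 + η.2.2 ^ 2) ^ ((1 : ℝ) / 4)

/-- The Korányi distance `d_ℍ(η,ξ) = |ξ⁻¹ ∘ η|_ℍ`. -/
def kDist {n : ℕ} (η ξ : Heis n) : ℝ := kNorm (hMul (hInv ξ) η)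

/-- The left-invariant vector field `X_i = ∂_{x_i} − 2 y_i ∂_τ` (as a vector at `η`). -/
def XV {n : ℕ} (i : Fin n) (η : Heis n) : Heis n :=
  (EuclideanSpace.single i (1 : ℝ), 0, -(2 * η.2.1 i))

/-- The left-invariant vector field `Y_i = ∂_{y_i} + 2 x_i ∂_τ` (as a vector at `η`). -/
def YV {n : ℕ} (i : Fin n) (η : Heis n) : Heis n :=
  (0, EuclideanSpace.single i (1 : ℝ), 2 * η.1 i)

/-- The derivative of `f` along the vector field `V`. -/
def vderiv {n : ℕ} (V : Heis n → Heis n) (f : Heis n → ℝ) (η : Heis n) : ℝ :=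
  fderiv ℝ f η (V η)

/-- The sub-Laplacian (Kohn Laplacian) `Δ_ℍ = Σ (X_i² + Y_i²)`. -/
def heisLap {n : ℕ} (f : Heis n → ℝ) (η : Heis n) : ℝ :=
  ∑ i : Fin n, (vderiv (XV i) (vderiv (XV i) f) η + vderiv (YV i) (vderiv (YV i) f) η)

/-- Partial derivative `∂_{x_i}`. -/
def pdx {n : ℕ} (i : Fin n) (f : Heis n → ℝ) (η : Heis n) : ℝ :=
  fderiv ℝ f η (EuclideanSpace.single i (1 : ℝ), 0, 0)

/-- Partial derivative `∂_{y_i}`. -/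
def pdy {n : ℕ} (i : Fin n) (f : Heis n → ℝ) (η : Heis n) : ℝ :=
  fderiv ℝ f η (0, EuclideanSpace.single i (1 : ℝ), 0)

/-- Partial derivative `∂_τ`. -/
def pdt {n : ℕ} (f : Heis n → ℝ) (η : Heis n) : ℝ :=
  fderiv ℝ f η (0, 0, 1)

/-- The Heisenberg convolution `(K ∗_ℍ |u|^p)(η) = ∫ K(d_ℍ(η,ξ)) |u(ξ)|^p dξ`, in `[0,∞]`. -/
def heisConv {n : ℕ} (K : ℝ → ℝ) (v : Heis n → ℝ) (p : ℝ) (η : Heis n) : ℝ≥0∞ :=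
  ∫⁻ ξ, ENNReal.ofReal (K (kDist η ξ) * |v ξ| ^ p)

/-- The nonlinearity `(K ∗_ℍ |u|^p)(η) |u(t,η)|^q`, valued in `[0,∞]`. -/
def nonlin {n : ℕ} (K : ℝ → ℝ) (p q : ℝ) (u : ℝ → Heis n → ℝ) (t : ℝ) (η : Heis n) : ℝ≥0∞ :=
  heisConv K (u t) p η * ENNReal.ofReal (|u t η| ^ q)

/-- The box `B_T = {(x,y,τ) : |x|² ≤ T, |y|² ≤ T, |τ| ≤ T}`. -/
def BT (n : ℕ) (T : ℝ) : Set (Heis n) :=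
  {η | ‖η.1‖ ^ 2 ≤ T ∧ ‖η.2.1‖ ^ 2 ≤ T ∧ |η.2.2| ≤ T}

/-- The parabolic dilation `δ_λ(x,y,τ) = (λx, λy, λ²τ)`. -/
def dilation (n : ℕ) (lam : ℝ) (η : Heis n) : Heis n :=
  (lam • η.1, lam • η.2.1, lam ^ 2 * η.2.2)

/-- A global weak solution of `u_t − Δ_ℍ u ≥ (K ∗_ℍ |u|^p)|u|^q`, `u(·,0) = u₀`:
`u ∈ L^p_loc((0,∞)×ℍⁿ)`, the nonlinearity is in `L¹_loc((0,∞)×ℍⁿ)`, and the weak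
integral inequality holds against every nonnegative compactly supported `C²` test
function for every time `τ ≥ 0`. -/
structure IsGlobalWeakSolution {n : ℕ} (K : ℝ → ℝ) (p q : ℝ)
    (u₀ : Heis n → ℝ) (u : ℝ → Heis n → ℝ) : Prop where
  measurable : Measurable (Function.uncurry u)
  lp_loc : ∀ S : Set (ℝ × Heis n), IsCompact S → S ⊆ Ioi (0 : ℝ) ×ˢ (univ : Set (Heis n)) →
    ∫⁻ z in S, ENNReal.ofReal (|u z.1 z.2| ^ p) < ∞
  nonlin_loc : ∀ S : Set (ℝ × Heis n), IsCompact S → S ⊆ Ioi (0 : ℝ) ×ˢ (univ : Set (Heis n)) →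
    ∫⁻ z in S, nonlin K p q u z.1 z.2 < ∞
  weak : ∀ ψ : ℝ × Heis n → ℝ, ContDiff ℝ 2 ψ → HasCompactSupport ψ →
    (∀ z, 0 ≤ ψ z) → ∀ τ : ℝ, 0 ≤ τ →
      (∫ t in Ioc (0 : ℝ) τ, ∫ η, (nonlin K p q u t η).toReal * ψ (t, η))
        + (∫ t in Ioc (0 : ℝ) τ, ∫ η, u t η * heisLap (fun ξ => ψ (t, ξ)) η)
        + (∫ t in Ioc (0 : ℝ) τ, ∫ η, u t η * deriv (fun s => ψ (s, η)) t)
      ≤ (∫ η, u τ η * ψ (τ, η)) - ∫ η, u₀ η * ψ (0, η)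


/-! For `η, ξ ∈ B_T` the coordinates of `ξ⁻¹ ∘ η` satisfy `|x|², |y|² ≤ 4T` and, by
Cauchy–Schwarz on the symplectic term, `|τ| ≤ 6T`; hence `d_ℍ(η, ξ)⁴ ≤ 100 T² < (12 √T)⁴`.
Off the null set `{ξ = η}` the distance is also positive, so the infimum condition gives
`K(d_ℍ(η, ξ)) ≥ K(12 √T)` for almost every `ξ ∈ B_T`; it remains to shrink the domain of the
convolution integral to `B_T`. -/

open scoped RealInnerProductSpace

instance (n : ℕ) : NullSingletonClass (volume : Measure (Heis n)) := by
  rw [Measure.volume_eq_prod, Measure.volume_eq_prod]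
  infer_instance

lemma ofReal_mul_setLIntegral_le_lintegral {α : Type*} [MeasurableSpace α] {μ : Measure α}
    {s : Set α} (hs : MeasurableSet s) {c : ℝ} (hc : 0 ≤ c) {k f : α → ℝ} (hf : ∀ x, 0 ≤ f x)
    (hck : ∀ᵐ x ∂μ, x ∈ s → c ≤ k x) :
    ENNReal.ofReal c * ∫⁻ x in s, ENNReal.ofReal (f x) ∂μ
      ≤ ∫⁻ x, ENNReal.ofReal (k x * f x) ∂μ :=
  calc ENNReal.ofReal c * ∫⁻ x in s, ENNReal.ofReal (f x) ∂μ
      = ∫⁻ x in s, ENNReal.ofReal (c * f x) ∂μ := by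
        simp_rw [ENNReal.ofReal_mul hc, lintegral_const_mul' _ _ ENNReal.ofReal_ne_top]
    _ ≤ ∫⁻ x in s, ENNReal.ofReal (k x * f x) ∂μ :=
        setLIntegral_mono_ae' hs <| hck.mono fun x hx hxs =>
          ENNReal.ofReal_le_ofReal (mul_le_mul_of_nonneg_right (hx hxs) (hf x))
    _ ≤ ∫⁻ x, ENNReal.ofReal (k x * f x) ∂μ := setLIntegral_le_lintegral _ _

lemma isClosed_BT (n : ℕ) (T : ℝ) : IsClosed (BT n T) := by
  simp only [BT, ofPred_and]
  exact (isClosed_le (by fun_prop) continuous_const).inter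
    ((isClosed_le (by fun_prop) continuous_const).inter (isClosed_le (by fun_prop) continuous_const))

section Koranyi

variable {n : ℕ}

lemma hMul_hInv_fst (η ξ : Heis n) : (hMul (hInv ξ) η).1 = η.1 - ξ.1 := by
  simp [hMul, hInv, sub_eq_neg_add]

lemma hMul_hInv_snd_fst (η ξ : Heis n) : (hMul (hInv ξ) η).2.1 = η.2.1 - ξ.2.1 := by
  simp [hMul, hInv, sub_eq_neg_add]

lemma hMul_hInv_snd_snd (η ξ : Heis n) :
    (hMul (hInv ξ) η).2.2 = η.2.2 - ξ.2.2 + 2 * (⟪η.1, ξ.2.1⟫ - ⟪ξ.1, η.2.1⟫) := by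
  simp only [hMul, hInv, PiLp.inner_apply, RCLike.inner_apply, conj_trivial, PiLp.neg_apply,
    ← Finset.sum_sub_distrib]
  rw [Finset.sum_congr rfl fun i _ => show -ξ.1 i * η.2.1 i - η.1 i * -ξ.2.1 i
    = ξ.2.1 i * η.1 i - η.2.1 i * ξ.1 i by ring]
  ring

lemma eq_of_hMul_hInv_eq_zero {η ξ : Heis n} (h : hMul (hInv ξ) η = 0) : η = ξ := by
  have h₁ : η.1 = ξ.1 := sub_eq_zero.1 (hMul_hInv_fst η ξ ▸ congrArg Prod.fst h)
  have h₂ : η.2.1 = ξ.2.1 :=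
    sub_eq_zero.1 (hMul_hInv_snd_fst η ξ ▸ congrArg (fun w : Heis n => w.2.1) h)
  have h₃ := hMul_hInv_snd_snd η ξ ▸ congrArg (fun w : Heis n => w.2.2) h
  rw [h₁, h₂] at h₃
  exact Prod.ext h₁ (Prod.ext h₂ (by simpa [sub_eq_zero] using h₃))

lemma kNorm_pow_four (η : Heis n) :
    kNorm η ^ 4 = (‖η.1‖ ^ 2 + ‖η.2.1‖ ^ 2) ^ 2 + η.2.2 ^ 2 := by
  rw [kNorm, one_div, ← Real.rpow_natCast, ← Real.rpow_mul (by positivity)]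
  norm_num

lemma kNorm_pos {η : Heis n} (h : η ≠ 0) : 0 < kNorm η := by
  refine Real.rpow_pos_of_pos ?_ _
  by_contra! hle
  obtain ⟨hxy, hτ⟩ := (add_eq_zero_iff_of_nonneg (by positivity) (by positivity)).1
    (le_antisymm hle (by positivity))
  obtain ⟨hx, hy⟩ := (add_eq_zero_iff_of_nonneg (by positivity) (by positivity)).1
    ((pow_eq_zero_iff two_ne_zero).1 hxy)
  exact h (Prod.ext (by simpa using hx) (Prod.ext (by simpa using hy) (by simpa using hτ)))

lemma kDist_pos {η ξ : Heis n} (h : ξ ≠ η) : 0 < kDist η ξ :=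
  kNorm_pos fun h₀ => h (eq_of_hMul_hInv_eq_zero h₀).symm

lemma kDist_pow_four_le_of_mem_BT {T : ℝ} {η ξ : Heis n} (hη : η ∈ BT n T) (hξ : ξ ∈ BT n T) :
    kDist η ξ ^ 4 ≤ 100 * T ^ 2 := by
  obtain ⟨hηx, hηy, hητ⟩ := hη
  obtain ⟨hξx, hξy, hξτ⟩ := hξ
  have hx : ‖η.1 - ξ.1‖ ^ 2 ≤ 4 * T := by
    nlinarith [norm_sub_le η.1 ξ.1, norm_nonneg (η.1 - ξ.1), sq_nonneg (‖η.1‖ - ‖ξ.1‖)]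
  have hy : ‖η.2.1 - ξ.2.1‖ ^ 2 ≤ 4 * T := by
    nlinarith [norm_sub_le η.2.1 ξ.2.1, norm_nonneg (η.2.1 - ξ.2.1),
      sq_nonneg (‖η.2.1‖ - ‖ξ.2.1‖)]
  have hxy : |⟪η.1, ξ.2.1⟫| ≤ T := (abs_real_inner_le_norm _ _).trans <| by
    nlinarith [sq_nonneg (‖η.1‖ - ‖ξ.2.1‖)]
  have hyx : |⟪ξ.1, η.2.1⟫| ≤ T := (abs_real_inner_le_norm _ _).trans <| by
    nlinarith [sq_nonneg (‖ξ.1‖ - ‖η.2.1‖)]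
  rw [abs_le] at hητ hξτ hxy hyx
  have hτ : (η.2.2 - ξ.2.2 + 2 * (⟪η.1, ξ.2.1⟫ - ⟪ξ.1, η.2.1⟫)) ^ 2 ≤ (6 * T) ^ 2 :=
    sq_le_sq' (by linarith) (by linarith)
  rw [kDist, kNorm_pow_four, hMul_hInv_fst, hMul_hInv_snd_fst, hMul_hInv_snd_snd]
  nlinarith

lemma kDist_lt_of_mem_BT {T : ℝ} (hT : 0 < T) {η ξ : Heis n} (hη : η ∈ BT n T)
    (hξ : ξ ∈ BT n T) : kDist η ξ < 12 * √T := by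
  refine lt_of_pow_lt_pow_left₀ 4 (by positivity) ?_
  calc kDist η ξ ^ 4 ≤ 100 * T ^ 2 := kDist_pow_four_le_of_mem_BT hη hξ
    _ < 20736 * T ^ 2 := by gcongr; norm_num
    _ = (12 * √T) ^ 4 := by
      rw [mul_pow, show √T ^ 4 = (√T ^ 2) ^ 2 by ring, Real.sq_sqrt hT.le]
      norm_num

end Koranyi

theorem heisConv_lower_bound_general
    (n : ℕ) (p : ℝ)
    (K : ℝ → ℝ) (hKpos : ∀ r > (0 : ℝ), 0 < K r)
    (R₀ : ℝ) (hKinf : ∀ R > R₀, sInf (K '' Ioo 0 R) = K R)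
    (T : ℝ) (hT : 1 < T) (hTR : R₀ < 12 * Real.sqrt T)
    (u : Heis n → ℝ) (η : Heis n) (hη : η ∈ BT n T) :
    ENNReal.ofReal (K (12 * Real.sqrt T)) * (∫⁻ ξ in BT n T, ENNReal.ofReal (|u ξ| ^ p))
      ≤ heisConv K u p η := by
  have hT₀ : 0 < T := by linarith
  have hKbdd : BddBelow (K '' Ioo 0 (12 * √T)) :=
    ⟨0, forall_mem_image.2 fun r hr => (hKpos r hr.1).le⟩
  have hK : ∀ ξ ∈ BT n T, ξ ≠ η → K (12 * √T) ≤ K (kDist η ξ) := fun ξ hξ hne =>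
    hKinf _ hTR ▸ csInf_le hKbdd
      (mem_image_of_mem K ⟨kDist_pos hne, kDist_lt_of_mem_BT hT₀ hη hξ⟩)
  exact ofReal_mul_setLIntegral_le_lintegral (isClosed_BT n T).measurableSet
    (hKpos _ (by positivity)).le (fun ξ => by positivity)
    ((Measure.ae_ne volume η).mono fun ξ hne hξ => hK ξ hξ hne)

/-- On the box `B_T`, the Heisenberg convolution is bounded below:
`(K ∗_ℍ |u|^p)(η) ≥ K(12√T) ∫_{B_T} |u(ξ)|^p dξ` for every `η ∈ B_T`. -/
theorem heisConv_lower_bound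
    (n : ℕ) (hn : 1 ≤ n) (p : ℝ) (hp : 0 < p)
    (K : ℝ → ℝ) (hKcont : ContinuousOn K (Ioi 0)) (hKpos : ∀ r > (0 : ℝ), 0 < K r)
    (R₀ : ℝ) (hR₀ : 1 < R₀) (hKinf : ∀ R > R₀, sInf (K '' Ioo 0 R) = K R)
    (T : ℝ) (hT : 1 < T) (hTR : R₀ < 12 * Real.sqrt T)
    (u : Heis n → ℝ) (hu : Measurable u) (η : Heis n) (hη : η ∈ BT n T) :
    ENNReal.ofReal (K (12 * Real.sqrt T)) * (∫⁻ ξ in BT n T, ENNReal.ofReal (|u ξ| ^ p))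
      ≤ heisConv K u p η :=
  heisConv_lower_bound_general n p K hKpos R₀ hKinf T hT hTR u η hη
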